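/- For variables $w_1,\dots,w_n$, $\sum_{j=1}^n \Delta(w_1,\dots,w_n)|_{w_j=0} \prod_{m=1}^n (1-w_j w_m) = (1-w_1^2\cdots w_n^2)\,\Delta(w_1,\dots,w_n)$. -/

import Mathlib

open Finset

/-- The Vandermonde product `∏_{i<j} (w j - w i)`. -/
def vandermondeProd {R : Type*} [CommRing R] {n : ℕ} (w : Fin n → R) : R :=
  ∏ p ∈ Finset.univ.filter (fun p : Fin n × Fin n => p.1 < p.2), (w p.2 - w p.1)

lemma vandermondeProd_eq_det {R : Type*} [CommRing R] {n : ℕ} (w : Fin n → R) :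
    vandermondeProd w = (Matrix.vandermonde w).det := by
  rw [Matrix.det_vandermonde, vandermondeProd, Finset.prod_filter, Fintype.prod_prod_type]
  refine Finset.prod_congr rfl fun i _ => ?_
  rw [← Finset.filter_lt_eq_Ioi, Finset.prod_filter]

open Polynomial in
lemma key_poly {R : Type*} [CommRing R] {n : ℕ} (w : Fin n → R) :
    ∃ c : ℕ → R, c 0 = 1 ∧ c n = (-1) ^ n * ∏ l, w l ∧
      ∀ i, (∏ l, (1 - w i * w l)) = ∑ k ∈ Finset.range (n + 1), c k * w i ^ k := by
  set P : R[X] := ∏ l : Fin n, (1 - X * C (w l)) with hP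
  have hfac : ∀ l : Fin n, (1 - X * C (w l)).natDegree ≤ 1 := by
    intro l
    refine le_trans (natDegree_sub_le _ _) ?_
    simp only [natDegree_one]
    refine max_le (by norm_num) (le_trans (natDegree_mul_le) ?_)
    simpa using Polynomial.natDegree_X_le
  have hdeg : P.natDegree < n + 1 := by
    refine Nat.lt_succ_of_le (le_trans (Polynomial.natDegree_prod_le
      (Finset.univ : Finset (Fin n)) (fun l => 1 - X * C (w l))) ?_)
    have h2 : ∑ l : Fin n, (1 - X * C (w l)).natDegree ≤ ∑ _l : Fin n, (1 : ℕ) :=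
      Finset.sum_le_sum fun l _ => hfac l
    simpa using h2
  refine ⟨fun k => P.coeff k, ?_, ?_, ?_⟩
  · show P.coeff 0 = 1
    rw [coeff_zero_eq_eval_zero, hP, eval_prod]
    simp
  · have := Polynomial.coeff_prod_of_natDegree_le (s := (Finset.univ : Finset (Fin n)))
      (fun l => 1 - X * C (w l)) 1 (fun l _ => hfac l)
    simp only [Finset.card_univ, Fintype.card_fin, mul_one] at this
    show P.coeff n = _
    rw [hP, this]
    have : ∀ l : Fin n, (1 - X * C (w l)).coeff 1 = -(w l) := by
      intro l
      rw [coeff_sub, coeff_one]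
      have : (X * C (w l)).coeff 1 = w l := by
        rw [mul_comm, coeff_C_mul, coeff_X_one, mul_one]
      rw [this]
      norm_num
    rw [Finset.prod_congr rfl fun l _ => this l]
    rw [show (fun l : Fin n => -(w l)) = (fun l : Fin n => (-1) * w l) by funext l; ring]
    rw [Finset.prod_mul_distrib, Finset.prod_const]
    simp
  · intro i
    have h1 : P.eval (w i) = ∏ l, (1 - w i * w l) := by
      rw [hP, eval_prod]
      refine Finset.prod_congr rfl fun l _ => ?_
      simp only [eval_sub, eval_one, eval_mul, eval_X, eval_C]
    rw [← h1, Polynomial.eval_eq_sum_range' hdeg]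

lemma stmt1_aux {R : Type*} [CommRing R] (m : ℕ) (w : Fin (m + 1) → R) :
    ∑ j : Fin (m + 1), vandermondeProd (Function.update w j 0)
        * ∏ l : Fin (m + 1), (1 - w j * w l)
      = (1 - ∏ j, w j ^ 2) * vandermondeProd w := by
  obtain ⟨c, hc0, hcn, hg⟩ := key_poly w
  set A := Matrix.vandermonde w with hA
  have hadj : ∀ j, vandermondeProd (Function.update w j 0) = A.adjugate 0 j := by
    intro j
    rw [vandermondeProd_eq_det, Matrix.adjugate_apply]
    congr 1
    ext i k
    rcases eq_or_ne i j with rfl | h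
    · simp only [Matrix.vandermonde, Matrix.of_apply, Function.update_self,
        Matrix.updateRow_self]
      rw [zero_pow_eq, Pi.single_apply]
      congr 1
      exact propext Fin.val_eq_zero_iff
    · simp [hA, Matrix.vandermonde, Matrix.updateRow_ne h, Function.update_of_ne h]
  simp_rw [hadj, hg]
  have swap : ∑ j : Fin (m + 1), A.adjugate 0 j * ∑ k ∈ Finset.range (m + 2), c k * w j ^ k
      = ∑ k ∈ Finset.range (m + 2), c k * ∑ j : Fin (m + 1), A.adjugate 0 j * w j ^ k := by
    simp_rw [Finset.mul_sum]
    rw [Finset.sum_comm]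
    refine Finset.sum_congr rfl fun k _ => Finset.sum_congr rfl fun j _ => by ring
  rw [swap, Finset.sum_range_succ]
  -- the terms with k ≤ m
  have h1 : ∀ k ∈ Finset.range (m + 1),
      c k * ∑ j : Fin (m + 1), A.adjugate 0 j * w j ^ k
        = if k = 0 then c 0 * A.det else 0 := by
    intro k hk
    rw [Finset.mem_range] at hk
    have : ∑ j : Fin (m + 1), A.adjugate 0 j * w j ^ k = (A.adjugate * A) 0 ⟨k, hk⟩ := by
      rw [Matrix.mul_apply]
      exact Finset.sum_congr rfl fun j _ => rfl
    rw [this, Matrix.adjugate_mul, Matrix.smul_apply, Matrix.one_apply]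
    have : ((0 : Fin (m + 1)) = ⟨k, hk⟩) ↔ (k = 0) := by
      simp [Fin.ext_iff, eq_comm]
    rcases eq_or_ne k 0 with rfl | hne
    · simp [this]
    · simp [this, hne]
  rw [Finset.sum_congr rfl h1, Finset.sum_ite_eq' (Finset.range (m + 1)) 0
    (fun _ => c 0 * A.det)]
  rw [if_pos (Finset.mem_range.mpr (Nat.succ_pos m))]
  -- the top term
  have hcram : ∀ j, A.adjugate 0 j = Matrix.cramer A (Pi.single j 1) 0 := by
    intro j
    have h := congrFun (congrFun (Matrix.adjugate_transpose A).symm j) 0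
    rw [Matrix.transpose_apply] at h
    rw [← h, Matrix.adjugate_def, Matrix.of_apply, Matrix.transpose_transpose]
  have htop : ∑ j : Fin (m + 1), A.adjugate 0 j * w j ^ (m + 1)
      = Matrix.cramer A (fun j => w j ^ (m + 1)) 0 := by
    have : ∀ j : Fin (m + 1), A.adjugate 0 j * w j ^ (m + 1)
        = Matrix.cramer A (Pi.single j (w j ^ (m + 1))) 0 := by
      intro j
      rw [hcram]
      have : (Pi.single j (w j ^ (m + 1)) : Fin (m + 1) → R)
          = w j ^ (m + 1) • (Pi.single j (1 : R) : Fin (m + 1) → R) := by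
        funext i
        by_cases hij : i = j <;> simp [Pi.single_apply, hij]
      rw [this, map_smul]
      simp [mul_comm]
    rw [Finset.sum_congr rfl fun j _ => this j]
    have := Matrix.sum_cramer (A := A) Finset.univ
      (fun j : Fin (m + 1) => (Pi.single j (w j ^ (m + 1)) : Fin (m + 1) → R))
    rw [show ∑ j : Fin (m + 1), (Pi.single j (w j ^ (m + 1)) : Fin (m + 1) → R)
        = fun j => w j ^ (m + 1) from Finset.univ_sum_single _] at this
    calc ∑ j : Fin (m + 1), Matrix.cramer A (Pi.single j (w j ^ (m + 1))) 0
        = (∑ j : Fin (m + 1), Matrix.cramer A (Pi.single j (w j ^ (m + 1)))) 0 := by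
          rw [Finset.sum_apply]
      _ = Matrix.cramer A (fun j => w j ^ (m + 1)) 0 := by rw [this]
  rw [htop]
  -- compute the cramer determinant
  set ρ : Equiv.Perm (Fin (m + 1)) := (finRotate (m + 1))⁻¹ with hρ
  have hρ0 : ρ 0 = Fin.last m := by
    rw [hρ, Equiv.Perm.inv_def, Equiv.symm_apply_eq, finRotate_succ_apply, Fin.last_add_one]
  have hρk : ∀ k : Fin (m + 1), k ≠ 0 → (ρ k : ℕ) = (k : ℕ) - 1 := by
    intro k hk
    have : ρ k = k - 1 := by
      rw [hρ, Equiv.Perm.inv_def, Equiv.symm_apply_eq, finRotate_succ_apply, sub_add_cancel]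
    rw [this, Fin.coe_sub_one, if_neg hk]
  have hcol : A.updateCol 0 (fun j => w j ^ (m + 1))
      = Matrix.of (fun i k => w i * (A.submatrix id ⇑ρ) i k) := by
    ext i k
    rcases eq_or_ne k 0 with rfl | h
    · rw [Matrix.updateCol_self]
      simp only [Matrix.of_apply, Matrix.submatrix_apply, id_eq, hρ0]
      rw [hA]
      simp only [Matrix.vandermonde, Matrix.of_apply, Fin.val_last]
      ring
    · rw [Matrix.updateCol_ne h]
      simp only [Matrix.of_apply, Matrix.submatrix_apply, id_eq]
      rw [hA]
      simp only [Matrix.vandermonde, Matrix.of_apply]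
      rw [hρk k h]
      have hk1 : 1 ≤ (k : ℕ) := by
        rcases Nat.eq_zero_or_pos (k : ℕ) with h0 | h0
        · exact absurd (Fin.ext h0) h
        · exact h0
      have hk2 : (k : ℕ) - 1 + 1 = (k : ℕ) := by omega
      conv_lhs => rw [← hk2]
      ring
  have hsign : ((Equiv.Perm.sign ρ : ℤ) : R) = (-1) ^ m := by
    rw [hρ, Equiv.Perm.sign_inv, sign_finRotate]
    push_cast
    rfl
  have hcval : Matrix.cramer A (fun j => w j ^ (m + 1)) 0
      = (∏ i, w i) * ((-1) ^ m * A.det) := by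
    rw [Matrix.cramer_apply, hcol]
    rw [Matrix.det_mul_column, Matrix.det_permute', hsign]
  rw [hcval, hc0, hcn, vandermondeProd_eq_det, ← hA]
  have hsq : (∏ j, w j ^ 2) = (∏ j, w j) ^ 2 := by rw [Finset.prod_pow]
  rw [hsq]
  have hpow : ((-1 : R)) ^ (m + 1) * (-1 : R) ^ m = -1 := by
    rw [← pow_add]
    have h2 : m + 1 + m = 2 * m + 1 := by ring
    rw [h2, pow_succ, pow_mul]
    norm_num
  linear_combination ((∏ i, w i) ^ 2 * A.det) * hpow

theorem stmt1 {R : Type*} [CommRing R] (n : ℕ) (w : Fin n → R) :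
    ∑ j : Fin n, vandermondeProd (Function.update w j 0) * ∏ m : Fin n, (1 - w j * w m)
      = (1 - ∏ j, w j ^ 2) * vandermondeProd w := by
  cases n with
  | zero => simp
  | succ m => exact stmt1_aux m w
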